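/- arXiv:2308.08701 — 5 statements merged into one kernel-verified Lean document; each statement's English description precedes it below -/
import Mathlib

section
/- Let b ∈ (0, π] and let F : ℝ → ℝ be differentiable on (cos b, 1] with F'(ζ) < 0 for all ζ ∈ (cos b, 1]. Define G(z) = F(cos z). Let x, y be unit vectors in ℝ³ with 0 < arccos⟨x,y⟩ < b, and let p be a nonzero vector in ℝ³ with ⟨p,x⟩ = 0. If p = -F'(⟨x,y⟩)·(y - ⟨x,y⟩x), then, writing θ = arccos⟨x,y⟩, one has y = cos(θ)·x + sin(θ)·(p/‖p‖) and ‖p‖ = G'(θ) = -F'(cos θ)·sin θ. In particular, y lies on the great circle of the unit sphere through x in the direction p, at geodesic distance θ = arccos⟨x,y⟩ from x. -/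
open Real Set
open scoped RealInnerProductSpace

noncomputable section

/-- For a spherical cost `c(x,y) = F(⟪x,y⟫) = G(d_{S²}(x,y))` with `F' < 0` on
`(cos b, 1]`, the mapping equation `p = -F'(⟪x,y⟫)(y - ⟪x,y⟫x)` forces `y` to lie on the great
circle through `x` in the direction `p`, at geodesic distance `θ = arccos⟪x,y⟫`, with
`‖p‖ = G'(θ) = -F'(cos θ) sin θ`. -/
theorem stmt_0
    (b : ℝ) (hb : b ∈ Set.Ioc 0 π)
    (F F' : ℝ → ℝ)
    (hF : ∀ ζ ∈ Set.Ioc (Real.cos b) 1, HasDerivAt F (F' ζ) ζ)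
    (hF'neg : ∀ ζ ∈ Set.Ioc (Real.cos b) 1, F' ζ < 0)
    (G : ℝ → ℝ) (hG : G = fun z => F (Real.cos z))
    (x y p : EuclideanSpace ℝ (Fin 3))
    (hx : ‖x‖ = 1) (hy : ‖y‖ = 1)
    (hθpos : 0 < Real.arccos ⟪x, y⟫) (hθlt : Real.arccos ⟪x, y⟫ < b)
    (hp0 : p ≠ 0) (hpx : ⟪p, x⟫ = 0)
    (hmap : p = (-F' ⟪x, y⟫) • (y - ⟪x, y⟫ • x)) :
    y = Real.cos (Real.arccos ⟪x, y⟫) • x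
        + Real.sin (Real.arccos ⟪x, y⟫) • (‖p‖⁻¹ • p)
    ∧ ‖p‖ = deriv G (Real.arccos ⟪x, y⟫)
    ∧ deriv G (Real.arccos ⟪x, y⟫)
        = -F' (Real.cos (Real.arccos ⟪x, y⟫)) * Real.sin (Real.arccos ⟪x, y⟫) := by
  set t := ⟪x, y⟫ with ht
  have habs : |t| ≤ 1 := by
    have h := abs_real_inner_le_norm x y
    simpa [hx, hy] using h
  have ht1 : -1 ≤ t := neg_le_of_abs_le habs
  have ht2 : t ≤ 1 := le_of_abs_le habs
  set θ := Real.arccos t with hθdef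
  have hcos : Real.cos θ = t := Real.cos_arccos ht1 ht2
  have hθle : θ ≤ π := Real.arccos_le_pi t
  have hsinpos : 0 < Real.sin θ :=
    Real.sin_pos_of_pos_of_lt_pi hθpos (lt_of_lt_of_le hθlt hb.2)
  have htmem : t ∈ Set.Ioc (Real.cos b) 1 := by
    refine ⟨?_, ht2⟩
    have h := Real.strictAntiOn_cos ⟨le_of_lt hθpos, hθle⟩ ⟨le_of_lt hb.1, hb.2⟩ hθlt
    rwa [hcos] at h
  have hF't : F' t < 0 := hF'neg t htmem
  have hyx : ⟪y, x⟫ = t := by rw [real_inner_comm]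
  have h1 : ‖y - t • x‖ ^ 2 = 1 - t ^ 2 := by
    rw [norm_sub_sq_real, real_inner_smul_right, hyx, norm_smul, hx, hy,
      Real.norm_eq_abs, mul_one, sq_abs]
    ring
  have hnormw : ‖y - t • x‖ = Real.sin θ := by
    have h2 : Real.sin θ ^ 2 = 1 - t ^ 2 := by rw [Real.sin_sq, hcos]
    rw [← Real.sqrt_sq (norm_nonneg _), h1, ← h2, Real.sqrt_sq hsinpos.le]
  have hnp : ‖p‖ = -F' t * Real.sin θ := by
    rw [hmap, norm_smul, hnormw, Real.norm_eq_abs, abs_of_pos (by linarith)]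
  have ha : F' t ≠ 0 := ne_of_lt hF't
  have hs : Real.sin θ ≠ 0 := ne_of_gt hsinpos
  have hne : -F' t * Real.sin θ ≠ 0 := mul_ne_zero (by linarith) hs
  refine ⟨?_, ?_, ?_⟩
  · have hc : Real.sin θ * (-F' t * Real.sin θ)⁻¹ * -F' t = 1 := by
      field_simp
    rw [hcos]
    conv_lhs => rw [show y = t • x + (y - t • x) by abel]
    rw [hnp, hmap, smul_smul, smul_smul, hc, one_smul]
  · have hFd : HasDerivAt F (F' t) (Real.cos θ) := hcos ▸ hF t htmem
    have hcd : HasDerivAt Real.cos (-Real.sin θ) θ := Real.hasDerivAt_cos θ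
    have hGd : HasDerivAt G (F' t * -Real.sin θ) θ := by
      rw [hG]; exact hFd.comp θ hcd
    rw [hGd.deriv, hnp]; ring
  · have hFd : HasDerivAt F (F' t) (Real.cos θ) := hcos ▸ hF t htmem
    have hcd : HasDerivAt Real.cos (-Real.sin θ) θ := Real.hasDerivAt_cos θ
    have hGd : HasDerivAt G (F' t * -Real.sin θ) θ := by
      rw [hG]; exact hFd.comp θ hcd
    rw [hGd.deriv, hcos]; ring
end
end

section
/- Fix n > 1. For t ∈ [0, 1/√(n² − 1)] define Δ(t) = 1 + (1 − n²)t², R₁(t) = (√(Δ(t)) + n t²)/(1 + t²), and R₂(t) = (√(Δ(t)) − n)/(1 + t²). Let x ∈ ℝ³ be a unit vector and let p ∈ ℝ³ satisfy ⟨p,x⟩ = 0 and 0 < ‖p‖ ≤ 1/√(n² − 1). Define y = R₁(‖p‖)·x + R₂(‖p‖)·p. Then ‖y‖ = 1, ⟨x,y⟩ = R₁(‖p‖), and p = −(y − ⟨x,y⟩x)/(n − ⟨x,y⟩); that is, y solves the mapping equation p = −∇_{S²,x} c(x,y) for the lens refractor I cost c(x,y) = −log(n − ⟨x,y⟩). 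-/
open Real Set
open scoped RealInnerProductSpace

noncomputable section

/-- For the lens refractor I cost `c(x,y) = -log(n - ⟪x,y⟫)` with `n > 1`, the
point `y = R₁(‖p‖)x + R₂(‖p‖)p` (with `R₁, R₂` as stated) is a unit vector with
`⟪x,y⟫ = R₁(‖p‖)` solving the mapping equation `p = -(y - ⟪x,y⟫x)/(n - ⟪x,y⟫)`. -/
theorem stmt_5
    (n : ℝ) (hn : 1 < n)
    (x p y : EuclideanSpace ℝ (Fin 3))
    (hx : ‖x‖ = 1) (hpx : ⟪p, x⟫ = 0)
    (hppos : 0 < ‖p‖) (hple : ‖p‖ ≤ 1 / Real.sqrt (n ^ 2 - 1))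
    (hy : y = ((Real.sqrt (1 + (1 - n ^ 2) * ‖p‖ ^ 2) + n * ‖p‖ ^ 2) / (1 + ‖p‖ ^ 2)) • x
            + ((Real.sqrt (1 + (1 - n ^ 2) * ‖p‖ ^ 2) - n) / (1 + ‖p‖ ^ 2)) • p) :
    ‖y‖ = 1
    ∧ ⟪x, y⟫ = (Real.sqrt (1 + (1 - n ^ 2) * ‖p‖ ^ 2) + n * ‖p‖ ^ 2) / (1 + ‖p‖ ^ 2)
    ∧ p = -((n - ⟪x, y⟫)⁻¹ • (y - ⟪x, y⟫ • x)) := by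
  set t := ‖p‖ with ht
  have hn2 : (0:ℝ) < n ^ 2 - 1 := by nlinarith
  have hsq : Real.sqrt (n ^ 2 - 1) > 0 := Real.sqrt_pos.2 hn2
  have ht1 : t * Real.sqrt (n ^ 2 - 1) ≤ 1 := by
    calc t * Real.sqrt (n ^ 2 - 1) ≤ (1 / Real.sqrt (n ^ 2 - 1)) * Real.sqrt (n ^ 2 - 1) :=
          mul_le_mul_of_nonneg_right hple hsq.le
      _ = 1 := by field_simp
  have hΔ0 : 0 ≤ 1 + (1 - n ^ 2) * t ^ 2 := by
    have : (t * Real.sqrt (n ^ 2 - 1)) ^ 2 ≤ 1 := by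
      nlinarith [ht1, hppos, mul_pos hppos hsq]
    rw [mul_pow, Real.sq_sqrt hn2.le] at this
    nlinarith
  set s := Real.sqrt (1 + (1 - n ^ 2) * t ^ 2) with hs
  have hs2 : s ^ 2 = 1 + (1 - n ^ 2) * t ^ 2 := Real.sq_sqrt hΔ0
  have hsle : s ≤ 1 := by
    exact Real.sqrt_le_one.2 (by nlinarith [sq_nonneg t])
  have hsn : s < n := lt_of_le_of_lt hsle hn
  have hden : (0:ℝ) < 1 + t ^ 2 := by positivity
  have hxp : ⟪x, p⟫ = 0 := by rw [real_inner_comm]; exact hpx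
  have hxx : ⟪x, x⟫ = 1 := by
    rw [real_inner_self_eq_norm_sq, hx]; norm_num
  have hpp : ⟪p, p⟫ = t ^ 2 := by
    rw [real_inner_self_eq_norm_sq]
  -- second claim
  have h2 : ⟪x, y⟫ = (s + n * t ^ 2) / (1 + t ^ 2) := by
    rw [hy, inner_add_right, real_inner_smul_right, real_inner_smul_right, hxx, hxp]
    ring
  -- first claim
  have hyy : ⟪y, y⟫ = 1 := by
    rw [hy, inner_add_add_self]
    simp only [real_inner_smul_left, real_inner_smul_right, hxx, hxp, hpx, hpp]
    field_simp
    linear_combination (1 + t ^ 2) * hs2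
  have h1 : ‖y‖ = 1 := by
    have := real_inner_self_eq_norm_sq y
    rw [hyy] at this
    nlinarith [norm_nonneg y]
  refine ⟨h1, h2, ?_⟩
  have hdiff : y - ⟪x, y⟫ • x = ((s - n) / (1 + t ^ 2)) • p := by
    rw [h2, hy]; module
  rw [hdiff, h2, smul_smul, ← neg_smul]
  have hne : n - (s + n * t ^ 2) / (1 + t ^ 2) = (n - s) / (1 + t ^ 2) := by
    field_simp; ring
  rw [hne]
  have hns : n - s ≠ 0 := sub_ne_zero.2 hsn.ne'
  have hc : -(((n - s) / (1 + t ^ 2))⁻¹ * ((s - n) / (1 + t ^ 2))) = 1 := by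
    have he : (s - n) / (1 + t ^ 2) = -((n - s) / (1 + t ^ 2)) := by ring
    rw [he, mul_neg, neg_neg, inv_mul_cancel₀ (div_ne_zero hns hden.ne')]
  rw [hc, one_smul]
end
end

section
/- Fix n > 1. For every t ∈ [0, 1/√(n² − 1)]: (√(1 + (1 − n²)t²) + n t²)/(1 + t²) ≥ 1/n, with equality if and only if t = 1/√(n² − 1). Consequently, for the lens refractor I mapping y = R₁(‖p‖)x + R₂(‖p‖)p one has the solvability condition ⟨x,y⟩ ≥ 1/n, i.e. mass cannot be transported a geodesic distance greater than arccos(1/n). -/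
/-!
Write `s = √(1 + (1 - n²) t²)`, so that `s² = 1 - (n² - 1) t²` and `0 ≤ s ≤ 1 < n`.
Clearing denominators, `n R₁(t) - 1 = s (n - s) / (1 + t²)`, which is nonnegative and
vanishes exactly when `s = 0`, i.e. at the endpoint `t = 1/√(n² - 1)`.
For `x` a unit vector and `p ⟂ x`, the inner product `⟪x, R₁ x + R₂ p⟫` is just `R₁(‖p‖)`.
-/

open Real Set
open scoped RealInnerProductSpace

noncomputable section

def lensR₁ (n t : ℝ) : ℝ :=
  (√(1 + (1 - n ^ 2) * t ^ 2) + n * t ^ 2) / (1 + t ^ 2)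

lemma mul_sq_le_one_of_le_one_div_sqrt {a t : ℝ} (ha : 0 < a) (ht₀ : 0 ≤ t)
    (ht : t ≤ 1 / √a) : a * t ^ 2 ≤ 1 := by
  have := pow_le_pow_left₀ ht₀ ht 2
  rw [div_pow, one_pow, sq_sqrt ha.le, le_div_iff₀ ha] at this
  linarith

lemma eq_one_div_sqrt_iff {a t : ℝ} (ha : 0 < a) (ht : 0 ≤ t) :
    t = 1 / √a ↔ a * t ^ 2 = 1 := by
  rw [eq_div_iff (sqrt_pos.mpr ha).ne', ← sq_eq_sq₀ (by positivity) zero_le_one, one_pow, mul_pow,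
    sq_sqrt ha.le, mul_comm]

lemma mul_lensR₁_sub_one {n t : ℝ} (ht : (n ^ 2 - 1) * t ^ 2 ≤ 1) :
    n * lensR₁ n t - 1 =
      √(1 + (1 - n ^ 2) * t ^ 2) * (n - √(1 + (1 - n ^ 2) * t ^ 2)) / (1 + t ^ 2) := by
  have hs := sq_sqrt (show 0 ≤ 1 + (1 - n ^ 2) * t ^ 2 by linarith)
  unfold lensR₁
  field_simp
  linear_combination hs

lemma sqrt_one_add_one_sub_sq_mul_lt {n t : ℝ} (hn : 1 < n) :
    √(1 + (1 - n ^ 2) * t ^ 2) < n := by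
  have hn2 : 0 ≤ n ^ 2 - 1 := by nlinarith
  exact (sqrt_le_one.mpr (by nlinarith [mul_nonneg hn2 (sq_nonneg t)])).trans_lt hn

lemma one_div_le_lensR₁ {n t : ℝ} (hn : 1 < n) (ht : (n ^ 2 - 1) * t ^ 2 ≤ 1) :
    1 / n ≤ lensR₁ n t := by
  have hlt := sqrt_one_add_one_sub_sq_mul_lt (t := t) hn
  rw [div_le_iff₀' (by linarith)]
  have : 0 ≤ n * lensR₁ n t - 1 := by
    rw [mul_lensR₁_sub_one ht]
    exact div_nonneg (mul_nonneg (sqrt_nonneg _) (by linarith)) (by positivity)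
  linarith

lemma lensR₁_eq_one_div_iff {n t : ℝ} (hn : 1 < n) (ht : (n ^ 2 - 1) * t ^ 2 ≤ 1) :
    lensR₁ n t = 1 / n ↔ (n ^ 2 - 1) * t ^ 2 = 1 := by
  have hlt := sqrt_one_add_one_sub_sq_mul_lt (t := t) hn
  calc lensR₁ n t = 1 / n
      ↔ n * lensR₁ n t - 1 = 0 := by
        rw [sub_eq_zero, eq_div_iff (by linarith), mul_comm]
    _ ↔ √(1 + (1 - n ^ 2) * t ^ 2) = 0 := by
        have hden : 1 + t ^ 2 ≠ 0 := by positivity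
        simp only [mul_lensR₁_sub_one ht, div_eq_zero_iff, mul_eq_zero, sub_eq_zero, hlt.ne', hden,
          or_false]
    _ ↔ (n ^ 2 - 1) * t ^ 2 = 1 := by
        rw [sqrt_eq_zero']
        constructor <;> intro h <;> linarith

lemma inner_smul_add_smul_of_orthogonal_unit {E : Type*} [NormedAddCommGroup E]
    [InnerProductSpace ℝ E] {x p : E} (hx : ‖x‖ = 1) (hpx : ⟪p, x⟫ = 0) (a b : ℝ) :
    ⟪x, a • x + b • p⟫ = a := by
  rw [inner_add_right, real_inner_smul_right, real_inner_smul_right, real_inner_self_eq_norm_sq,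
    hx, real_inner_comm, hpx]
  ring

/-- For `n > 1` and `t ∈ [0, 1/√(n²-1)]`:
`(√(1+(1-n²)t²) + nt²)/(1+t²) ≥ 1/n`, with equality iff `t = 1/√(n²-1)`.
Consequently, for the lens refractor I mapping `y = R₁(‖p‖)x + R₂(‖p‖)p` one has the
solvability condition `⟪x,y⟫ ≥ 1/n`. -/
theorem stmt_6
    (n : ℝ) (hn : 1 < n) :
    (∀ t ∈ Set.Icc (0 : ℝ) (1 / Real.sqrt (n ^ 2 - 1)),
        1 / n ≤ (Real.sqrt (1 + (1 - n ^ 2) * t ^ 2) + n * t ^ 2) / (1 + t ^ 2)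
        ∧ ((Real.sqrt (1 + (1 - n ^ 2) * t ^ 2) + n * t ^ 2) / (1 + t ^ 2) = 1 / n
            ↔ t = 1 / Real.sqrt (n ^ 2 - 1)))
    ∧ ∀ x p y : EuclideanSpace ℝ (Fin 3), ‖x‖ = 1 → ⟪p, x⟫ = 0 →
        ‖p‖ ≤ 1 / Real.sqrt (n ^ 2 - 1) →
        y = ((Real.sqrt (1 + (1 - n ^ 2) * ‖p‖ ^ 2) + n * ‖p‖ ^ 2) / (1 + ‖p‖ ^ 2)) • x
            + ((Real.sqrt (1 + (1 - n ^ 2) * ‖p‖ ^ 2) - n) / (1 + ‖p‖ ^ 2)) • p →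
        1 / n ≤ ⟪x, y⟫ := by
  have hn2 : 0 < n ^ 2 - 1 := by nlinarith
  have bounds : ∀ t ∈ Set.Icc (0 : ℝ) (1 / √(n ^ 2 - 1)),
      1 / n ≤ lensR₁ n t ∧ (lensR₁ n t = 1 / n ↔ t = 1 / √(n ^ 2 - 1)) := by
    rintro t ⟨ht₀, ht⟩
    have hsq := mul_sq_le_one_of_le_one_div_sqrt hn2 ht₀ ht
    exact ⟨one_div_le_lensR₁ hn hsq,
      (lensR₁_eq_one_div_iff hn hsq).trans (eq_one_div_sqrt_iff hn2 ht₀).symm⟩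
  refine ⟨bounds, fun x p y hx hpx hp hy => ?_⟩
  rw [hy, inner_smul_add_smul_of_orthogonal_unit hx hpx]
  exact (bounds ‖p‖ ⟨norm_nonneg p, hp⟩).1
end
end

section
/- The function t ↦ t·cos(t)/sin(t) is concave on the interval (0, π). (This is the function f₄(p) = −(x·y)F'(x·y) arising from the squared geodesic cost c(x,y) = (1/2)d_{S²}(x,y)² on the unit sphere, expressed as a function of t = ‖p‖.) -/
/-!
With `f t = t cos t / sin t` one computes `f'' t = -2 (sin t - t cos t) / sin³ t`. On `(0, π)` the
sine is positive and `t cos t < sin t` (trivially where `cos t ≤ 0`, and from `t < tan t` on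
`(0, π/2)`), so `f'' ≤ 0` there.
-/

open Real Set

lemma mul_cos_lt_sin {t : ℝ} (h0 : 0 < t) (hπ : t < π) : t * cos t < sin t := by
  have hsin : 0 < sin t := sin_pos_of_pos_of_lt_pi h0 hπ
  rcases le_or_gt (π / 2) t with hle | hlt
  · have hcos : cos t ≤ 0 := cos_nonpos_of_pi_div_two_le_of_le hle (by linarith)
    nlinarith
  · have hcos : 0 < cos t := cos_pos_of_mem_Ioo ⟨by linarith, hlt⟩
    have htan : t < sin t / cos t := tan_eq_sin_div_cos t ▸ lt_tan h0 hlt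
    rwa [lt_div_iff₀ hcos] at htan

lemma hasDerivAt_mul_cos_div_sin {t : ℝ} (hs : sin t ≠ 0) :
    HasDerivAt (fun t => t * cos t / sin t) ((sin t * cos t - t) / sin t ^ 2) t := by
  refine (((hasDerivAt_id' t).mul (hasDerivAt_cos t)).div (hasDerivAt_sin t) hs).congr_deriv ?_
  simp only [Pi.mul_apply]
  field_simp
  linear_combination (-t) * sin_sq_add_cos_sq t

lemma hasDerivAt_sin_mul_cos_sub_div_sin_sq {t : ℝ} (hs : sin t ≠ 0) :
    HasDerivAt (fun t => (sin t * cos t - t) / sin t ^ 2)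
      (-2 * (sin t - t * cos t) / sin t ^ 3) t := by
  refine ((((hasDerivAt_sin t).mul (hasDerivAt_cos t)).sub (hasDerivAt_id' t)).div
    ((hasDerivAt_sin t).pow 2) (pow_ne_zero 2 hs)).congr_deriv ?_
  simp only [Pi.mul_apply, Pi.sub_apply, Pi.pow_apply]
  field_simp
  linear_combination (-sin t ^ 2) * sin_sq_add_cos_sq t

/-- The function `t ↦ t·cos t / sin t` is concave on `(0, π)`. This is
`f₄(p) = -(x·y)F'(x·y)` for the squared geodesic cost on the unit sphere as a function of
`t = ‖p‖`. -/
theorem stmt_16 :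
    ConcaveOn ℝ (Set.Ioo 0 π) (fun t : ℝ => t * Real.cos t / Real.sin t) := by
  have hsin : ∀ t ∈ Ioo 0 π, sin t ≠ 0 := fun t ht => (sin_pos_of_pos_of_lt_pi ht.1 ht.2).ne'
  refine concaveOn_of_hasDerivWithinAt2_nonpos (convex_Ioo 0 π)
    (f' := fun t => (sin t * cos t - t) / sin t ^ 2)
    (f'' := fun t => -2 * (sin t - t * cos t) / sin t ^ 3) ?_ ?_ ?_ ?_ <;>
    try rw [interior_Ioo]
  · exact (continuous_id.mul continuous_cos).continuousOn.div continuous_sin.continuousOn hsin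
  · exact fun t ht => (hasDerivAt_mul_cos_div_sin (hsin t ht)).hasDerivWithinAt
  · exact fun t ht => (hasDerivAt_sin_mul_cos_sub_div_sin_sq (hsin t ht)).hasDerivWithinAt
  · intro t ⟨h0, hπ⟩
    have hsin_pos := sin_pos_of_pos_of_lt_pi h0 hπ
    have hgap : 0 < sin t - t * cos t := sub_pos.mpr (mul_cos_lt_sin h0 hπ)
    exact div_nonpos_of_nonpos_of_nonneg (by linarith) (by positivity)
end

section
/- Fix s > 1 and define, for t > 0: f₄(t) = t·cos(t^{1/(s−1)})/sin(t^{1/(s−1)}) and f₂(t) = (s − 1)·t^{−s/(s−1)} − t^{−2}·f₄(t). Then lim_{t→0⁺} t^{s/(s−1)}·(f₂(t) + f₄(t)) = s − 2. In particular, for s > 2 the quantity f₂(t) + f₄(t) blows up to +∞ like (s − 2)t^{−s/(s−1)} as t → 0⁺, so the strict concavity of f₂ + f₄ required by the uniformly positive cost-sectional curvature condition As fails for the power cost c(x,y) = (1/s)d_{S²}(x,y)^s with s > 2, and the leading-order cancellation occurs only at s = 2. -/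
open Real Set Filter Topology

noncomputable section

/-! With `u = t^{1/(s-1)}` one has `t^{s/(s-1)} = t u`, and the expression becomes
`(s - 1) - u cot u + t² u cot u`. Since `u → 0⁺` and `u cot u → 1`, the limit is `s - 2`. -/

lemma tendsto_mul_cos_div_sin_nhdsNE_zero :
    Tendsto (fun x : ℝ => x * cos x / sin x) (𝓝[≠] 0) (𝓝 1) := by
  have h : Tendsto (fun x : ℝ => cos x / sinc x) (𝓝 0) (𝓝 (cos 0 / sinc 0)) :=
    (continuous_cos.tendsto 0).div (continuous_sinc.tendsto 0) (by simp)
  rw [cos_zero, sinc_zero, div_one] at h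
  refine (h.mono_left nhdsWithin_le_nhds).congr' ?_
  filter_upwards [self_mem_nhdsWithin] with x hx
  rw [sinc_of_ne_zero hx, div_div_eq_mul_div, mul_comm]

lemma tendsto_rpow_nhdsGT_zero {p : ℝ} (hp : 0 < p) :
    Tendsto (fun t : ℝ => t ^ p) (𝓝[>] 0) (𝓝[>] 0) := by
  refine tendsto_nhdsWithin_iff.mpr ⟨?_, ?_⟩
  · have h := (continuousAt_rpow_const 0 p (Or.inr hp.le)).tendsto
    rw [zero_rpow hp.ne'] at h
    exact h.mono_left nhdsWithin_le_nhds
  · filter_upwards [self_mem_nhdsWithin] with t ht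
    exact rpow_pos_of_pos ht p

lemma rpow_div_sub_one {s t : ℝ} (hs : s ≠ 1) (ht : 0 < t) :
    t ^ (s / (s - 1)) = t * t ^ (1 / (s - 1)) := by
  have hs' : s - 1 ≠ 0 := sub_ne_zero.mpr hs
  rw [show s / (s - 1) = 1 + 1 / (s - 1) by field_simp; ring, rpow_add ht, rpow_one]

/-- For the power cost on the sphere with `s > 1`, setting
`f₄(t) = t cos(t^{1/(s-1)})/sin(t^{1/(s-1)})` and
`f₂(t) = (s-1) t^{-s/(s-1)} - t^{-2} f₄(t)`, one has
`t^{s/(s-1)} (f₂(t) + f₄(t)) → s - 2` as `t → 0⁺`. -/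
theorem stmt_18
    (s : ℝ) (hs : 1 < s)
    (f₄ f₂ : ℝ → ℝ)
    (hf₄ : ∀ t : ℝ, 0 < t →
        f₄ t = t * Real.cos (t ^ (1 / (s - 1))) / Real.sin (t ^ (1 / (s - 1))))
    (hf₂ : ∀ t : ℝ, 0 < t →
        f₂ t = (s - 1) * t ^ (-s / (s - 1)) - t ^ (-2 : ℝ) * f₄ t) :
    Filter.Tendsto (fun t : ℝ => t ^ (s / (s - 1)) * (f₂ t + f₄ t))
      (nhdsWithin 0 (Set.Ioi 0)) (nhds (s - 2)) := by
  set u : ℝ → ℝ := fun t => t ^ (1 / (s - 1))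
  have hu : Tendsto u (𝓝[>] 0) (𝓝[>] 0) := tendsto_rpow_nhdsGT_zero (one_div_pos.mpr (by linarith))
  have hcot : Tendsto (fun t => u t * cos (u t) / sin (u t)) (𝓝[>] 0) (𝓝 1) :=
    tendsto_mul_cos_div_sin_nhdsNE_zero.comp (hu.mono_right (nhdsGT_le_nhdsNE 0))
  have hsq : Tendsto (fun t : ℝ => t ^ 2) (𝓝[>] 0) (𝓝 0) := by
    simpa using ((continuous_pow 2).tendsto (0 : ℝ)).mono_left nhdsWithin_le_nhds
  have hlim := ((tendsto_const_nhds (x := s - 1)).sub hcot).add (hsq.mul hcot)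
  rw [show s - 1 - 1 + 0 * 1 = s - 2 by ring] at hlim
  refine hlim.congr' ?_
  filter_upwards [self_mem_nhdsWithin] with t (ht : 0 < t)
  have hut : u t ≠ 0 := (rpow_pos_of_pos ht _).ne'
  rw [hf₂ t ht, hf₄ t ht, rpow_div_sub_one hs.ne' ht, neg_div, rpow_neg ht.le,
    rpow_div_sub_one hs.ne' ht, rpow_neg ht.le, rpow_two]
  field_simp
  ring
end
end
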